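/- Let G be a locally compact group and N a closed normal subgroup. For every n ∈ N, the modular function of G restricted to N equals the modular function of N: Δ_G(n) = Δ_N(n). -/

import Mathlib

/-!
Integrating first along the cosets of `N` with a Haar measure of `N`, then over `G ⧸ N` with a
Haar measure of the quotient, defines a Haar measure on `G` (Weil's construction). Right
translation by `n ∈ N` only moves points inside the fibres, where it rescales the Haar measure
of `N` by `Δ_N(n)⁻¹`; by uniqueness of Haar measure this factor is also `Δ_G(n)⁻¹`.
-/

open MeasureTheory Measure
open scoped NNReal

section ModularCharacter

variable {G : Type*} [Group G] [TopologicalSpace G] [IsTopologicalGroup G]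
  [LocallyCompactSpace G] [MeasurableSpace G] [BorelSpace G]

theorem integral_mul_right_eq_modularCharacterFun_smul (μ : Measure G) [IsHaarMeasure μ]
    {f : G → ℝ} (hf : Continuous f) (hfc : HasCompactSupport f) (g : G) :
    ∫ x, f (x * g) ∂μ = modularCharacterFun g • ∫ x, f x ∂μ := by
  rw [← integral_map (by fun_prop) hf.aestronglyMeasurable,
    integral_isMulLeftInvariant_eq_smul_of_hasCompactSupport _ μ hf hfc,
    integral_smul_nnreal_measure, ← modularCharacterFun_eq_haarScalarFactor]

theorem coe_modularCharacterFun_of_map_mul_right_eq_smul {μ : Measure G} [IsHaarMeasure μ]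
    {g : G} {c : ℝ} (h : μ.map (· * g) = ENNReal.ofReal c • μ) :
    (modularCharacterFun g : ℝ) = c := by
  have hc : modularCharacterFun g = c.toNNReal := by
    have h' : μ.map (· * g) = c.toNNReal • μ := h
    simp only [modularCharacterFun_eq_haarScalarFactor μ, h', haarScalarFactor_smul,
      haarScalarFactor_self, smul_eq_mul, mul_one]
  have hpos : 0 < c := Real.toNNReal_pos.1 (hc ▸ modularCharacterFun_pos g)
  rw [hc, Real.coe_toNNReal _ hpos.le]

end ModularCharacter

namespace TopologicalGroup.IsSES

variable {A B C : Type*} [Group A] [Group B] [Group C]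
  [TopologicalSpace A] [TopologicalSpace B] [TopologicalSpace C]
  [IsTopologicalGroup A] [IsTopologicalGroup B] [IsTopologicalGroup C]
  [LocallyCompactSpace A] [LocallyCompactSpace B]
  {φ : A →* B} {ψ : B →* C}

theorem pushforward_comp_mulRight (H : IsSES φ ψ) [MeasurableSpace A] [BorelSpace A]
    (μA : Measure A) [IsHaarMeasure μA] (f : CompactlySupportedContinuousMap B ℝ) (a : A) :
    H.pushforward μA (f.comp (Homeomorph.mulRight (φ a)).toCocompactMap) =
      modularCharacterFun a • H.pushforward μA f := by
  ext c
  obtain ⟨b, rfl⟩ := H.isOpenQuotientMap.surjective c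
  have hpullback : ∀ x, H.pullback (f.comp (Homeomorph.mulRight (φ a)).toCocompactMap) b x =
      H.pullback f b (x * a) := fun x => by simp [pullback_def, mul_assoc]
  simp only [CompactlySupportedContinuousMap.coe_smul, Pi.smul_apply, pushforward_apply_apply,
    hpullback]
  exact integral_mul_right_eq_modularCharacterFun_smul μA (H.pullback f b).continuous
    (H.pullback f b).hasCompactSupport a

theorem modularCharacterFun_restrict [T2Space B] (H : IsSES φ ψ) (a : A) :
    modularCharacterFun (φ a) = modularCharacterFun a := by
  borelize A B C
  have := H.isOpenQuotientMap.locallyCompactSpace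
  set μ := H.inducedMeasure (haar : Measure A) (haar : Measure C)
  obtain ⟨f, hfc, hf0, hf1⟩ := exists_continuous_nonneg_pos (1 : B)
  let F : CompactlySupportedContinuousMap B ℝ := ⟨f, hfc⟩
  have hF : ∫ x, F x ∂μ ≠ 0 :=
    (f.continuous.integral_pos_of_hasCompactSupport_nonneg_nonzero hfc hf0 hf1).ne'
  have key : (modularCharacterFun (φ a) : ℝ) * ∫ x, F x ∂μ =
      modularCharacterFun a * ∫ x, F x ∂μ := calc
    _ = ∫ x, F (x * φ a) ∂μ :=
      (integral_mul_right_eq_modularCharacterFun_smul μ F.continuous F.hasCompactSupport _).symm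
    _ = ∫ x, F.comp (Homeomorph.mulRight (φ a)).toCocompactMap x ∂μ := rfl
    _ = modularCharacterFun a * ∫ x, F x ∂μ := by
      rw [integral_inducedMeasure, integrate_apply, pushforward_comp_mulRight, NNReal.smul_def,
        CompactlySupportedContinuousMap.coe_smul, Pi.smul_def, integral_smul, smul_eq_mul,
        ← integrate_apply, ← integral_inducedMeasure]
  exact NNReal.coe_injective (mul_right_cancel₀ hF key)

end TopologicalGroup.IsSES

theorem modular_function_restricts_to_normal_subgroup_general
    {G : Type*} [Group G] [TopologicalSpace G] [IsTopologicalGroup G]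
    [LocallyCompactSpace G] [T2Space G] [MeasurableSpace G] [BorelSpace G]
    (N : Subgroup G) [N.Normal] (hN : IsClosed (N : Set G))
    -- left Haar measures on G and on N
    (μG : Measure G) [μG.IsHaarMeasure]
    [MeasurableSpace ↥N] [BorelSpace ↥N]
    (μN : Measure ↥N) [μN.IsHaarMeasure]
    -- the modular functions of G and N
    (ΔG : G → ℝ)
    (hΔG : ∀ t : G, μG.map (fun x => x * t) = ENNReal.ofReal (ΔG t)⁻¹ • μG)
    (ΔN : ↥N → ℝ)
    (hΔN : ∀ t : ↥N, μN.map (fun x => x * t) = ENNReal.ofReal (ΔN t)⁻¹ • μN) :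
    ∀ n : ↥N, ΔG (n : G) = ΔN n := by
  intro n
  have : LocallyCompactSpace N := hN.locallyCompactSpace
  have modG := coe_modularCharacterFun_of_map_mul_right_eq_smul (hΔG n)
  have modN := coe_modularCharacterFun_of_map_mul_right_eq_smul (hΔN n)
  rw [← (TopologicalGroup.IsSES.ofClosedSubgroup N hN).modularCharacterFun_restrict n] at modN
  exact inv_injective (modG.symm.trans modN)

/-- For a closed normal subgroup `N` of a locally compact group `G`, the
modular function of `G` restricted to `N` equals the modular function of `N`:
`Δ_G(n) = Δ_N(n)` for all `n ∈ N`.  The modular functions are characterized by the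
scaling of left Haar measure under right translation. -/
theorem modular_function_restricts_to_normal_subgroup
    {G : Type*} [Group G] [TopologicalSpace G] [IsTopologicalGroup G]
    [LocallyCompactSpace G] [T2Space G] [MeasurableSpace G] [BorelSpace G]
    (N : Subgroup G) [N.Normal] (hN : IsClosed (N : Set G))
    -- left Haar measures on G and on N
    (μG : Measure G) [μG.IsHaarMeasure]
    [MeasurableSpace ↥N] [BorelSpace ↥N]
    (μN : Measure ↥N) [μN.IsHaarMeasure]
    -- the modular functions of G and N
    (ΔG : G → ℝ) (hΔG_pos : ∀ s, 0 < ΔG s)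
    (hΔG : ∀ t : G, μG.map (fun x => x * t) = ENNReal.ofReal (ΔG t)⁻¹ • μG)
    (ΔN : ↥N → ℝ) (hΔN_pos : ∀ t, 0 < ΔN t)
    (hΔN : ∀ t : ↥N, μN.map (fun x => x * t) = ENNReal.ofReal (ΔN t)⁻¹ • μN) :
    ∀ n : ↥N, ΔG (n : G) = ΔN n :=
  modular_function_restricts_to_normal_subgroup_general N hN μG μN ΔG hΔG ΔN hΔN
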